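/- Let v be an element of the degree-2 part of F and let b₁, b₂ ∈ ℂ. Then in H_v the identity (x₁ + b₁·y)² + (x₂ + b₂·y)² + (x₁ + b₁·y)·(x₂ + b₂·y) = 0 holds if and only if (b₁² + b₂² + b₁·b₂)·v = (2b₁ + b₂)·x₁ + (b₁ + 2b₂)·x₂ in F. -/

import Mathlib

noncomputable section

open MvPolynomial

/-- The relations ideal for the cohomology of the flag manifold `SU(3)/T`. -/
def Frel : Ideal (MvPolynomial (Fin 2) ℂ) :=
  Ideal.span {X 0 ^ 2 + X 1 ^ 2 + X 0 * X 1, X 0 ^ 2 * X 1 + X 0 * X 1 ^ 2}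

/-- `F = ℂ[x₁,x₂]/(x₁²+x₂²+x₁x₂, x₁²x₂+x₁x₂²)`. -/
abbrev F := MvPolynomial (Fin 2) ℂ ⧸ Frel

def x₁ : F := Ideal.Quotient.mk Frel (X 0)
def x₂ : F := Ideal.Quotient.mk Frel (X 1)

/-- The degree-2 part of `F`. -/
def deg2F : Submodule ℂ F := Submodule.span ℂ {x₁, x₂}

/-- The relations ideal for `H_u = F[y]/(y² + u·y)`. -/
def Hrel (u : F) : Ideal (Polynomial F) :=
  Ideal.span {Polynomial.X ^ 2 + Polynomial.C u * Polynomial.X}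

/-- `H_u = F[y]/(y² + u·y)`. -/
instance Hrel_isTwoSided (u : F) : (Hrel u).IsTwoSided :=
  ⟨fun b ha => mul_comm b _ ▸ (Hrel u).smul_mem _ ha⟩

abbrev H (u : F) := Polynomial F ⧸ Hrel u

/-- The class `y` in `H_u`. -/
def yH (u : F) : H u := Ideal.Quotient.mk (Hrel u) Polynomial.X

/-- The canonical map `F → H_u`, as a `ℂ`-algebra homomorphism. -/
def ιH (u : F) : F →ₐ[ℂ] H u :=
  (Ideal.Quotient.mkₐ ℂ (Hrel u)).comp (IsScalarTower.toAlgHom ℂ F (Polynomial F))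

/-- The degree-2 part of `H_u`. -/
def deg2H (u : F) : Submodule ℂ (H u) :=
  Submodule.span ℂ {ιH u x₁, ιH u x₂, yH u}

/-- `ω` acts on degree 2 by the matrix `(a₁₁ a₁₂; a₂₁ a₂₂)`. -/
def actsAs (ω : F ≃ₐ[ℂ] F) (a₁₁ a₁₂ a₂₁ a₂₂ : ℂ) : Prop :=
  ω x₁ = a₁₁ • x₁ + a₂₁ • x₂ ∧ ω x₂ = a₁₂ • x₁ + a₂₂ • x₂

/-- Membership in the Weyl group `W` (the six listed automorphisms). -/
def InW (ω : F ≃ₐ[ℂ] F) : Prop :=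
  actsAs ω 1 0 0 1 ∨ actsAs ω 0 1 1 0 ∨ actsAs ω (-1) 0 (-1) 1 ∨
    actsAs ω 1 (-1) 0 (-1) ∨ actsAs ω 0 (-1) 1 (-1) ∨ actsAs ω (-1) 1 (-1) 0

/-!
In `H_v = F ⊕ F·y` we have `y² = -v·y`, so expanding the left-hand side and using the relation
`x₁² + x₂² + x₁x₂ = 0` of `F` leaves `((2b₁ + b₂)x₁ + (b₁ + 2b₂)x₂ - (b₁² + b₂² + b₁b₂)v)·y`.
Since `y² + v·y` is monic of degree 2, `c·y` vanishes in `H_v` only for `c = 0`.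
-/

namespace Polynomial

theorem X_sq_add_C_mul_X_dvd_C_mul_X_iff {R : Type*} [Semiring R] (u c : R) :
    X ^ 2 + C u * X ∣ C c * X ↔ c = 0 := by
  refine ⟨fun hdvd => ?_, fun hc => by simp [hc]⟩
  by_contra hc
  have : Nontrivial R := nontrivial_of_ne c 0 hc
  have hmonic : (X ^ 2 + C u * X).Monic := monic_X_pow_add (by compute_degree!)
  have hdeg : (X ^ 2 + C u * X).natDegree = 2 := by compute_degree!
  refine hmonic.not_dvd_of_natDegree_lt (by simpa using hc) ?_ hdvd
  rw [hdeg, natDegree_C_mul_X c hc]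
  norm_num

end Polynomial

theorem sq_add_sq_add_mul_add_smul {K A : Type*} [CommRing K] [CommRing A] [Algebra K A]
    (a₁ a₂ u y : A) (b₁ b₂ : K) :
    (a₁ + b₁ • y) ^ 2 + (a₂ + b₂ • y) ^ 2 + (a₁ + b₁ • y) * (a₂ + b₂ • y) =
      a₁ ^ 2 + a₂ ^ 2 + a₁ * a₂ +
        ((2 * b₁ + b₂) • a₁ + (b₁ + 2 * b₂) • a₂ - (b₁ ^ 2 + b₂ ^ 2 + b₁ * b₂) • u) * y +
        (b₁ ^ 2 + b₂ ^ 2 + b₁ * b₂) • (y ^ 2 + u * y) := by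
  simp only [Algebra.smul_def, map_add, map_mul, map_pow, map_ofNat]
  ring

theorem x₁_sq_add_x₂_sq_add_x₁_mul_x₂ : x₁ ^ 2 + x₂ ^ 2 + x₁ * x₂ = 0 := by
  rw [x₁, x₂, ← map_pow, ← map_pow, ← map_mul, ← map_add, ← map_add,
    Ideal.Quotient.eq_zero_iff_mem]
  exact Ideal.subset_span (Or.inl rfl)

section H

variable (u : F)

theorem ιH_apply (c : F) : ιH u c = Ideal.Quotient.mkₐ ℂ (Hrel u) (Polynomial.C c) := rfl

theorem yH_eq : yH u = Ideal.Quotient.mkₐ ℂ (Hrel u) Polynomial.X := rfl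

theorem mkₐ_X_sq_add_C_mul_X :
    Ideal.Quotient.mkₐ ℂ (Hrel u) (Polynomial.X ^ 2 + Polynomial.C u * Polynomial.X) = 0 :=
  Ideal.Quotient.eq_zero_iff_mem.mpr (Ideal.subset_span rfl)

theorem ιH_mul_yH_eq_zero_iff (c : F) : ιH u c * yH u = 0 ↔ c = 0 := by
  rw [ιH_apply, yH_eq, ← map_mul, Ideal.Quotient.mkₐ_eq_mk, Ideal.Quotient.eq_zero_iff_mem, Hrel,
    Ideal.mem_span_singleton (α := Polynomial F), Polynomial.X_sq_add_C_mul_X_dvd_C_mul_X_iff]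

theorem sq_add_sq_add_mul_ιH_add_smul_yH (b₁ b₂ : ℂ) :
    (ιH u x₁ + b₁ • yH u) ^ 2 + (ιH u x₂ + b₂ • yH u) ^ 2 +
        (ιH u x₁ + b₁ • yH u) * (ιH u x₂ + b₂ • yH u) =
      ιH u ((2 * b₁ + b₂) • x₁ + (b₁ + 2 * b₂) • x₂ - (b₁ ^ 2 + b₂ ^ 2 + b₁ * b₂) • u) * yH u := by
  simp only [ιH_apply, yH_eq, ← map_smul, ← map_add, ← map_pow, ← map_mul]
  rw [sq_add_sq_add_mul_add_smul (K := ℂ) (A := Polynomial F) (u := Polynomial.C u),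
    map_add, map_smul, mkₐ_X_sq_add_C_mul_X, smul_zero, add_zero]
  simp only [Polynomial.smul_C, ← map_pow, ← map_mul, ← map_add, ← map_sub,
    x₁_sq_add_x₂_sq_add_x₁_mul_x₂, map_zero, zero_add]

end H

theorem stmt19_general (v : F) (b₁ b₂ : ℂ) :
    (ιH v x₁ + b₁ • yH v) ^ 2 + (ιH v x₂ + b₂ • yH v) ^ 2 +
        (ιH v x₁ + b₁ • yH v) * (ιH v x₂ + b₂ • yH v) = 0 ↔
      (b₁ ^ 2 + b₂ ^ 2 + b₁ * b₂) • v = (2 * b₁ + b₂) • x₁ + (b₁ + 2 * b₂) • x₂ := by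
  rw [sq_add_sq_add_mul_ιH_add_smul_yH, ιH_mul_yH_eq_zero_iff, sub_eq_zero, eq_comm]

/-- For `v` in the degree-2 part of `F` and `b₁, b₂ ∈ ℂ`, the identity
`(x₁ + b₁·y)² + (x₂ + b₂·y)² + (x₁ + b₁·y)·(x₂ + b₂·y) = 0` holds in `H_v` if and only
if `(b₁² + b₂² + b₁·b₂)·v = (2b₁ + b₂)·x₁ + (b₁ + 2b₂)·x₂` in `F`. -/
theorem stmt19 (v : F) (hv : v ∈ deg2F) (b₁ b₂ : ℂ) :
    (ιH v x₁ + b₁ • yH v) ^ 2 + (ιH v x₂ + b₂ • yH v) ^ 2 +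
        (ιH v x₁ + b₁ • yH v) * (ιH v x₂ + b₂ • yH v) = 0 ↔
      (b₁ ^ 2 + b₂ ^ 2 + b₁ * b₂) • v = (2 * b₁ + b₂) • x₁ + (b₁ + 2 * b₂) • x₂ :=
  stmt19_general v b₁ b₂
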